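/- Let I=⟨A,∅,R,R?⟩ be an AtIAF, S⊆A a set of arguments such that S is not stable-co with respect to I, and r=(a,b)∈R? an attack with a∈S and b∉S. Then: (i) r∈RE⁺(I,S,(co,true)) if and only if either ((b,b)∉R and OutRel(I,S,r)=true), or (S is not a subset of {b}^∼_I, b∉S⁺_I, and PosVer_co(I+{(a,b)},S)=true); and (ii) r∈RE⁻(I,S,(co,true)) if and only if there exists v∈A∖(S∪{b}) such that (b,v)∈R∪R?, (v,v)∉R, and OutRel(I,S,(b,v))=true. -/
import Mathlib


universe u

/-- An abstract argumentation framework: a set of arguments with an attack relation. -/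
structure AF (α : Type u) where
  args : Set α
  att : Set (α × α)

namespace AF

variable {α : Type u}

/-- `S⁺_F`: arguments attacked by `S`. -/
def plusSet (F : AF α) (S : Set α) : Set α := {a | a ∈ F.args ∧ ∃ b ∈ S, (b, a) ∈ F.att}

/-- `S⁻_F`: arguments attacking `S`. -/
def minusSet (F : AF α) (S : Set α) : Set α := {a | a ∈ F.args ∧ ∃ b ∈ S, (a, b) ∈ F.att}

/-- `S` is conflict-free in `F`. -/
def confFree (F : AF α) (S : Set α) : Prop := S ∩ F.plusSet S = ∅

/-- `S` defends `a` in `F`: every attacker of `a` is attacked by `S`. -/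
def defends (F : AF α) (S : Set α) (a : α) : Prop := ∀ b, (b, a) ∈ F.att → b ∈ F.plusSet S

/-- The characteristic function `Γ_F(S)`: arguments defended by `S`. -/
def Γ (F : AF α) (S : Set α) : Set α := {a | a ∈ F.args ∧ F.defends S a}

/-- Admissible: conflict-free and self-defending. -/
def isAd (F : AF α) (S : Set α) : Prop := S ⊆ F.args ∧ F.confFree S ∧ S ⊆ F.Γ S

/-- Stable: conflict-free and attacking exactly the outside. -/
def isSt (F : AF α) (S : Set α) : Prop := S ⊆ F.args ∧ F.confFree S ∧ F.plusSet S = F.args \ S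

/-- Complete: admissible and containing all defended arguments. -/
def isCo (F : AF α) (S : Set α) : Prop := F.isAd S ∧ F.Γ S ⊆ S

/-- Grounded: ⊆-minimal complete. -/
def isGr (F : AF α) (S : Set α) : Prop := F.isCo S ∧ ∀ T, F.isCo T → T ⊆ S → T = S

/-- Preferred: ⊆-maximal admissible. -/
def isPr (F : AF α) (S : Set α) : Prop := F.isAd S ∧ ∀ T, F.isAd T → S ⊆ T → S = T

end AF

/-- The five common semantics. -/
inductive Sem : Type
  | ad | st | co | gr | pr
deriving DecidableEq

/-- `S` is a `σ`-extension of `F`. -/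
def extOf {α : Type u} : Sem → AF α → Set α → Prop
  | .ad => AF.isAd
  | .st => AF.isSt
  | .co => AF.isCo
  | .gr => AF.isGr
  | .pr => AF.isPr

/-- An incomplete argumentation framework (data part). -/
structure IAF (α : Type u) where
  A : Set α
  Aq : Set α
  R : Set (α × α)
  Rq : Set (α × α)

namespace IAF

variable {α : Type u}

/-- Well-formedness: `A`,`A?` disjoint; `R`,`R?` disjoint subsets of `(A∪A?)×(A∪A?)`. -/
def WF (I : IAF α) : Prop :=
  Disjoint I.A I.Aq ∧ Disjoint I.R I.Rq ∧
  I.R ⊆ (I.A ∪ I.Aq) ×ˢ (I.A ∪ I.Aq) ∧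
  I.Rq ⊆ (I.A ∪ I.Aq) ×ˢ (I.A ∪ I.Aq)

/-- `cert(I)`: the AF projected on the certain part. -/
def cert (I : IAF α) : AF α := ⟨I.A, I.R ∩ I.A ×ˢ I.A⟩

/-- `I'` is a partial completion of `I`. -/
def PartOf (I' I : IAF α) : Prop :=
  I'.WF ∧ I.A ⊆ I'.A ∧ I'.A ⊆ I.A ∪ I.Aq ∧
  I.R ∩ (I'.A ∪ I'.Aq) ×ˢ (I'.A ∪ I'.Aq) ⊆ I'.R ∧
  I'.R ⊆ I.R ∪ I.Rq ∧ I'.Aq ⊆ I.Aq ∧ I'.Rq ⊆ I.Rq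

/-- `F` is a completion of `I`. -/
def IsCompletion (I : IAF α) (F : AF α) : Prop := ∃ I' : IAF α, I'.PartOf I ∧ F = I'.cert

/-- `I + R₀` for a set of uncertain attacks. -/
def addR (I : IAF α) (R0 : Set (α × α)) : IAF α := ⟨I.A, I.Aq, I.R ∪ R0, I.Rq \ R0⟩

/-- `I − R₀` for a set of uncertain attacks. -/
def subR (I : IAF α) (R0 : Set (α × α)) : IAF α := ⟨I.A, I.Aq, I.R, I.Rq \ R0⟩

/-- `I + A₀` for a set of uncertain arguments. -/
def addA (I : IAF α) (A0 : Set α) : IAF α := ⟨I.A ∪ A0, I.Aq \ A0, I.R, I.Rq⟩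

/-- `I − A₀` for a set of uncertain arguments. -/
def subA (I : IAF α) (A0 : Set α) : IAF α :=
  ⟨I.A, I.Aq \ A0,
   I.R \ {p | p ∈ I.R ∪ I.Rq ∧ (p.1 ∈ A0 ∨ p.2 ∈ A0)},
   I.Rq \ {p | p ∈ I.R ∪ I.Rq ∧ (p.1 ∈ A0 ∨ p.2 ∈ A0)}⟩

/-- `S⁺_I`. -/
def plusI (I : IAF α) (S : Set α) : Set α := {a | a ∈ I.A ∪ I.Aq ∧ ∃ b ∈ S, (b, a) ∈ I.R}

/-- `S⁻_I`. -/
def minusI (I : IAF α) (S : Set α) : Set α := {a | a ∈ I.A ∪ I.Aq ∧ ∃ b ∈ S, (a, b) ∈ I.R}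

/-- `S^∼_I`. -/
def simI (I : IAF α) (S : Set α) : Set α :=
  {a | a ∈ I.A ∪ I.Aq ∧ ∀ b ∈ S, (b, a) ∉ I.R ∪ I.Rq}

end IAF

/-- An element of an IAF: either an argument or an attack. -/
inductive Elem (α : Type u) : Type u
  | arg (a : α)
  | att (r : α × α)

/-- `e` is an uncertain element of `I`, i.e. `e ∈ A? ∪ R?`. -/
def IAF.isUnc {α : Type u} (I : IAF α) : Elem α → Prop
  | .arg a => a ∈ I.Aq
  | .att r => r ∈ I.Rq

/-- `I + {e}`. -/
def IAF.addE {α : Type u} (I : IAF α) : Elem α → IAF α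
  | .arg a => I.addA {a}
  | .att r => I.addR {r}

/-- `I − {e}`. -/
def IAF.subE {α : Type u} (I : IAF α) : Elem α → IAF α
  | .arg a => I.subA {a}
  | .att r => I.subR {r}

/-- `e` is the unique uncertain element of `I`, i.e. `A? ∪ R? = {e}`. -/
def onlyUnc {α : Type u} (I : IAF α) : Elem α → Prop
  | .arg a => I.Aq = {a} ∧ I.Rq = ∅
  | .att r => I.Aq = ∅ ∧ I.Rq = {r}

/-- A verification status: a semantics together with true/false. -/
abbrev VStatus := Sem × Bool

/-- `S` has verification status `j` in the AF `F`. -/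
def hasStatus {α : Type u} (F : AF α) (S : Set α) (j : VStatus) : Prop :=
  cond j.2 (extOf j.1 F S) (¬ extOf j.1 F S)

/-- `S` is stable-`j` w.r.t. `I`. -/
def IAF.stableJ {α : Type u} (I : IAF α) (S : Set α) (j : VStatus) : Prop :=
  ∀ F, I.IsCompletion F → hasStatus F S j

/-- `S` is stable-`σ` w.r.t. `I`. -/
def IAF.stableSem {α : Type u} (I : IAF α) (S : Set α) (σ : Sem) : Prop :=
  I.stableJ S (σ, true) ∨ I.stableJ S (σ, false)

/-- `RE⁺(I,S,j)`: uncertain elements whose addition is `j`-relevant for `S` w.r.t. `I`. -/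
def REplus {α : Type u} (I : IAF α) (S : Set α) (j : VStatus) : Set (Elem α) :=
  {e | I.isUnc e ∧ ∃ I' : IAF α, I'.PartOf I ∧ onlyUnc I' e ∧
    hasStatus (I'.addE e).cert S j ∧ ¬ hasStatus (I'.subE e).cert S j}

/-- `RE⁻(I,S,j)`: uncertain elements whose removal is `j`-relevant for `S` w.r.t. `I`. -/
def REminus {α : Type u} (I : IAF α) (S : Set α) (j : VStatus) : Set (Elem α) :=
  {e | I.isUnc e ∧ ∃ I' : IAF α, I'.PartOf I ∧ onlyUnc I' e ∧
    hasStatus (I'.subE e).cert S j ∧ ¬ hasStatus (I'.addE e).cert S j}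

/-- `e` is `σ`-irrelevant for `S` w.r.t. `I`. -/
def irrelevant {α : Type u} (I : IAF α) (S : Set α) (σ : Sem) (e : Elem α) : Prop :=
  e ∉ REplus I S (σ, true) ∧ e ∉ REminus I S (σ, true) ∧
  e ∉ REplus I S (σ, false) ∧ e ∉ REminus I S (σ, false)

/-- `PosVer_σ(I,S) = true`. -/
def PosVer {α : Type u} (σ : Sem) (I : IAF α) (S : Set α) : Prop :=
  ∃ F, I.IsCompletion F ∧ extOf σ F S

/-- `NecVer_σ(I,S) = true`. -/
def NecVer {α : Type u} (σ : Sem) (I : IAF α) (S : Set α) : Prop :=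
  ∀ F, I.IsCompletion F → extOf σ F S

/-- `SRE⁺(I,S,j)`: uncertain elements whose addition is strongly `j`-relevant. -/
def SREplus {α : Type u} (I : IAF α) (S : Set α) (j : VStatus) : Set (Elem α) :=
  {e | I.isUnc e ∧ ∀ I' : IAF α, I'.PartOf (I.subE e) → ¬ I'.stableJ S j}

/-- `SRE⁻(I,S,j)`: uncertain elements whose removal is strongly `j`-relevant. -/
def SREminus {α : Type u} (I : IAF α) (S : Set α) (j : VStatus) : Set (Elem α) :=
  {e | I.isUnc e ∧ ∀ I' : IAF α, I'.PartOf (I.addE e) → ¬ I'.stableJ S j}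

/-- The `OutRel(I,S,(a,b))` predicate. -/
def OutRel {α : Type u} (I : IAF α) (S : Set α) (r : α × α) : Prop :=
  (I.minusI {r.2} \ {r.1}) ∩ I.simI S = ∅ ∧
  PosVer Sem.co
    ((I.addR {p | p ∈ I.Rq ∧ p.1 ∈ S ∧ p.2 ∈ I.minusI {r.2} \ {r.1}}).subR
      {p | p ∈ I.Rq ∧ p.1 ≠ r.1 ∧ p.2 = r.2}) S


section Aux
variable {α : Type u}

/-- Complete semantics, unfolded for an AF `⟨A, X⟩` with `X ⊆ A ×ˢ A`. -/
def Co (A : Set α) (X : Set (α × α)) (S : Set α) : Prop :=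
  S ⊆ A ∧ (∀ u ∈ S, ∀ v ∈ S, (u, v) ∉ X) ∧
  (∀ s ∈ S, ∀ u, (u, s) ∈ X → ∃ t ∈ S, (t, u) ∈ X) ∧
  (∀ v ∈ A, (∀ u, (u, v) ∈ X → ∃ t ∈ S, (t, u) ∈ X) → v ∈ S)

lemma isCo_iff_Co {A : Set α} {X : Set (α × α)} {S : Set α} (hX : X ⊆ A ×ˢ A) :
    AF.isCo ⟨A, X⟩ S ↔ Co A X S := by
  constructor
  · rintro ⟨⟨hSA, hcf, hadm⟩, hΓ⟩
    refine ⟨hSA, ?_, ?_, ?_⟩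
    · intro u hu v hv huv
      have : v ∈ S ∩ AF.plusSet ⟨A, X⟩ S := ⟨hv, hSA hv, u, hu, huv⟩
      rw [hcf] at this; exact this
    · intro s hs u hus
      obtain ⟨_, hd⟩ := hadm hs
      obtain ⟨_, t, ht, htu⟩ := hd u hus
      exact ⟨t, ht, htu⟩
    · intro v hv hdef
      apply hΓ
      refine ⟨hv, fun u hu => ⟨(hX hu).1, ?_⟩⟩
      obtain ⟨t, ht, htu⟩ := hdef u hu
      exact ⟨t, ht, htu⟩
  · rintro ⟨hSA, hcf, hadm, hΓ⟩
    refine ⟨⟨hSA, ?_, ?_⟩, ?_⟩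
    · ext x; simp only [Set.mem_inter_iff, Set.mem_empty_iff_false, iff_false, not_and]
      rintro hx ⟨_, u, hu, hux⟩
      exact hcf u hu x hx hux
    · intro s hs
      refine ⟨hSA hs, fun u hu => ?_⟩
      obtain ⟨t, ht, htu⟩ := hadm s hs u hu
      exact ⟨(hX htu).2, t, ht, htu⟩
    · rintro v ⟨hvA, hd⟩
      exact hΓ v hvA fun u hu => (hd u hu).2.imp fun t ⟨ht, htu⟩ => ⟨ht, htu⟩

/-- Completions of a well-formed IAF with no uncertain arguments. -/
lemma completion_iff {J : IAF α} (hWF : J.WF) (hAq : J.Aq = ∅) (F : AF α) :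
    J.IsCompletion F ↔ ∃ Q ⊆ J.Rq, F = ⟨J.A, J.R ∪ Q⟩ := by
  obtain ⟨hA, hR, hRs, hRqs⟩ := hWF
  rw [hAq, Set.union_empty] at hRs hRqs
  constructor
  · rintro ⟨I', ⟨hWF', hA1, hA2, hR1, hR2, hAq', hRq'⟩, rfl⟩
    rw [hAq] at hA2
    rw [Set.union_empty] at hA2
    have hA' : I'.A = J.A := le_antisymm hA2 hA1
    rw [hAq] at hAq'
    have hAq'' : I'.Aq = ∅ := Set.subset_empty_iff.mp hAq'
    have hRsub : J.R ⊆ I'.R := by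
      refine fun p hp => hR1 ⟨hp, ?_⟩
      rw [hA', hAq'', Set.union_empty]
      exact hRs hp
    have hRA : I'.R ⊆ J.A ×ˢ J.A := fun p hp => (hR2 hp).elim (fun h => hRs h) (fun h => hRqs h)
    refine ⟨I'.R \ J.R, ?_, ?_⟩
    · intro p hp
      rcases hR2 hp.1 with h | h
      · exact absurd h hp.2
      · exact h
    · unfold IAF.cert
      rw [hA']
      congr 1
      rw [Set.inter_eq_left.mpr hRA, Set.union_diff_cancel' (le_refl _) hRsub]
  · rintro ⟨Q, hQ, rfl⟩
    refine ⟨⟨J.A, ∅, J.R ∪ Q, ∅⟩, ⟨⟨?_, ?_, ?_, ?_⟩, ?_, ?_, ?_, ?_, ?_, ?_⟩, ?_⟩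
    · exact Set.disjoint_empty _
    · exact Set.disjoint_empty _
    · simp only [Set.union_empty]
      exact Set.union_subset hRs fun p hp => hRqs (hQ hp)
    · simp
    · exact le_refl _
    · rw [hAq]; simp
    · exact fun p hp => Or.inl hp.1
    · exact Set.union_subset Set.subset_union_left fun p hp => Or.inr (hQ hp)
    · simp
    · simp
    · unfold IAF.cert
      congr 1
      simp only
      rw [Set.inter_eq_left.mpr (Set.union_subset hRs fun p hp => hRqs (hQ hp))]

lemma posVer_co_iff {J : IAF α} (hWF : J.WF) (hAq : J.Aq = ∅) (S : Set α) :
    PosVer Sem.co J S ↔ ∃ Q ⊆ J.Rq, Co J.A (J.R ∪ Q) S := by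
  have hRs : J.R ⊆ J.A ×ˢ J.A := by have := hWF.2.2.1; rwa [hAq, Set.union_empty] at this
  have hRqs : J.Rq ⊆ J.A ×ˢ J.A := by have := hWF.2.2.2; rwa [hAq, Set.union_empty] at this
  constructor
  · rintro ⟨F, hF, hco⟩
    obtain ⟨Q, hQ, rfl⟩ := (completion_iff hWF hAq F).mp hF
    exact ⟨Q, hQ, (isCo_iff_Co (Set.union_subset hRs fun p hp => hRqs (hQ hp))).mp hco⟩
  · rintro ⟨Q, hQ, hco⟩
    exact ⟨_, (completion_iff hWF hAq _).mpr ⟨Q, hQ, rfl⟩,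
      (isCo_iff_Co (Set.union_subset hRs fun p hp => hRqs (hQ hp))).mpr hco⟩

/-- Characterization of the "witness partial completion" part of `RE±` for an attack. -/
lemma att_witness_iff {I : IAF α} (hWF : I.WF) (hAq : I.Aq = ∅) {r : α × α} (hr : r ∈ I.Rq)
    (P Q' : AF α → Prop) :
    (∃ I' : IAF α, I'.PartOf I ∧ onlyUnc I' (Elem.att r) ∧
      P (I'.addE (Elem.att r)).cert ∧ Q' (I'.subE (Elem.att r)).cert) ↔
    (∃ Q ⊆ I.Rq \ {r}, P ⟨I.A, I.R ∪ Q ∪ {r}⟩ ∧ Q' ⟨I.A, I.R ∪ Q⟩) := by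
  have hRs : I.R ⊆ I.A ×ˢ I.A := by have := hWF.2.2.1; rwa [hAq, Set.union_empty] at this
  have hRqs : I.Rq ⊆ I.A ×ˢ I.A := by have := hWF.2.2.2; rwa [hAq, Set.union_empty] at this
  have hdisj : Disjoint I.R I.Rq := hWF.2.1
  constructor
  · rintro ⟨I', ⟨hWF', hA1, hA2, hR1, hR2, hAq', hRq'⟩, ⟨hAq'', hRq''⟩, hP, hQ'⟩
    rw [hAq, Set.union_empty] at hA2
    have hA' : I'.A = I.A := le_antisymm hA2 hA1
    have hRsub : I.R ⊆ I'.R := by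
      refine fun p hp => hR1 ⟨hp, ?_⟩
      rw [hA', hAq'', Set.union_empty]
      exact hRs hp
    have hRA : I'.R ⊆ I.A ×ˢ I.A := fun p hp => (hR2 hp).elim (fun h => hRs h) (fun h => hRqs h)
    have hrR' : r ∉ I'.R := fun h =>
      (hWF'.2.1.ne_of_mem h (by rw [hRq'']; exact rfl)) rfl
    have hUn : I.R ∪ I'.R \ I.R = I'.R := Set.union_diff_cancel hRsub
    have e1 : (I'.addE (Elem.att r)).cert = ⟨I.A, I.R ∪ I'.R \ I.R ∪ {r}⟩ := by
      show IAF.cert ⟨I'.A, I'.Aq, I'.R ∪ {r}, I'.Rq \ {r}⟩ = _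
      unfold IAF.cert
      rw [hA', hUn]
      congr 1
      exact Set.inter_eq_left.mpr
        (Set.union_subset hRA (by simpa using hRqs hr))
    have e2 : (I'.subE (Elem.att r)).cert = ⟨I.A, I.R ∪ I'.R \ I.R⟩ := by
      show IAF.cert ⟨I'.A, I'.Aq, I'.R, I'.Rq \ {r}⟩ = _
      unfold IAF.cert
      rw [hA', hUn]
      congr 1
      exact Set.inter_eq_left.mpr hRA
    refine ⟨I'.R \ I.R, fun p hp => ⟨?_, ?_⟩, ?_, ?_⟩
    · rcases hR2 hp.1 with h | h
      · exact absurd h hp.2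
      · exact h
    · intro h
      rw [Set.mem_singleton_iff] at h
      exact hrR' (h ▸ hp.1)
    · rw [← e1]; exact hP
    · rw [← e2]; exact hQ'
  · rintro ⟨Q, hQ, hP, hQ'⟩
    have hQq : Q ⊆ I.Rq := fun p hp => (hQ hp).1
    have hrQ : r ∉ Q := fun h => (hQ h).2 rfl
    have hRQA : I.R ∪ Q ⊆ I.A ×ˢ I.A := Set.union_subset hRs fun p hp => hRqs (hQq hp)
    refine ⟨⟨I.A, ∅, I.R ∪ Q, {r}⟩, ⟨⟨?_, ?_, ?_, ?_⟩, ?_, ?_, ?_, ?_, ?_, ?_⟩,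
      ⟨rfl, rfl⟩, ?_, ?_⟩
    · exact Set.disjoint_empty _
    · refine Set.disjoint_left.mpr fun p hp hp' => ?_
      rw [Set.mem_singleton_iff] at hp'
      subst hp'
      rcases hp with h | h
      · exact hdisj.ne_of_mem h hr rfl
      · exact hrQ h
    · simpa using hRQA
    · simpa using hRqs hr
    · exact le_refl _
    · rw [hAq]; simp
    · exact fun p hp => Or.inl hp.1
    · exact Set.union_subset Set.subset_union_left fun p hp => Or.inr (hQq hp)
    · rw [hAq]
    · simpa using hr
    · show P (IAF.cert ⟨I.A, ∅, I.R ∪ Q ∪ {r}, {r} \ {r}⟩)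
      unfold IAF.cert
      have : (I.R ∪ Q ∪ {r}) ∩ I.A ×ˢ I.A = I.R ∪ Q ∪ {r} :=
        Set.inter_eq_left.mpr (Set.union_subset hRQA (by simpa using hRqs hr))
      rw [this]
      exact hP
    · show Q' (IAF.cert ⟨I.A, ∅, I.R ∪ Q, {r} \ {r}⟩)
      unfold IAF.cert
      rw [Set.inter_eq_left.mpr hRQA]
      exact hQ'

section Core
variable {A : Set α} {R Rq : Set (α × α)} {S : Set α} {a b : α}

/-- RHS case 2 implies the witness for `RE⁺`. -/
lemma pb2 (ha : a ∈ S) (hb : b ∉ S)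
    (hs : ∃ s ∈ S, (b, s) ∈ R ∪ Rq) (hnb : ∀ u ∈ S, (u, b) ∉ R)
    (h : ∃ Q₂ ⊆ Rq \ {(a, b)}, Co A (R ∪ {(a, b)} ∪ Q₂) S) :
    ∃ Q ⊆ Rq \ {(a, b)}, Co A (R ∪ Q ∪ {(a, b)}) S ∧ ¬ Co A (R ∪ Q) S := by
  obtain ⟨s, hsS, hbs⟩ := hs
  obtain ⟨Q₂, hQ₂, hSA, hcf, hadm, hcomp⟩ := h
  set Q : Set (α × α) := (Q₂ \ {p : α × α | p.1 ∈ S ∧ p.2 = b}) ∪ ({(b, s)} ∩ Rq) with hQdef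
  have hab : a ≠ b := fun h => hb (h ▸ ha)
  have hsb : s ≠ b := fun h => hb (h ▸ hsS)
  have hQsub : Q ⊆ Rq \ {(a, b)} := by
    rintro p (⟨hp, _⟩ | ⟨hp1, hp2⟩)
    · exact hQ₂ hp
    · rw [Set.mem_singleton_iff] at hp1
      subst hp1
      refine ⟨hp2, fun h => ?_⟩
      rw [Set.mem_singleton_iff, Prod.mk.injEq] at h
      exact hsb h.2
  -- (b,s) is an attack in R ∪ Q
  have hbs3 : (b, s) ∈ R ∪ Q := by
    rcases hbs with h | h
    · exact Or.inl h
    · exact Or.inr (Or.inr ⟨rfl, h⟩)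
  -- no attack from S to b in R ∪ Q
  have hSb3 : ∀ u ∈ S, (u, b) ∉ R ∪ Q := by
    rintro u hu (h | (⟨h1, h2⟩ | ⟨h1, _⟩))
    · exact hnb u hu h
    · exact h2 ⟨hu, rfl⟩
    · rw [Set.mem_singleton_iff, Prod.mk.injEq] at h1
      exact hb (h1.1 ▸ hu)
  -- S attacks the same arguments in both frameworks
  have hplus : ∀ x, (∃ t ∈ S, (t, x) ∈ R ∪ Q ∪ {(a, b)}) ↔
      (∃ t ∈ S, (t, x) ∈ R ∪ {(a, b)} ∪ Q₂) := by
    intro x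
    constructor
    · rintro ⟨t, ht, (h | h) | h⟩
      · exact ⟨t, ht, Or.inl (Or.inl h)⟩
      · rcases h with ⟨h, _⟩ | ⟨h1, _⟩
        · exact ⟨t, ht, Or.inr h⟩
        · rw [Set.mem_singleton_iff, Prod.mk.injEq] at h1
          exact absurd (h1.1 ▸ ht) hb
      · exact ⟨t, ht, Or.inl (Or.inr h)⟩
    · rintro ⟨t, ht, (h | h) | h⟩
      · exact ⟨t, ht, Or.inl (Or.inl h)⟩
      · exact ⟨t, ht, Or.inr h⟩
      · by_cases hx : x = b
        · exact ⟨a, ha, Or.inr (by rw [hx]; rfl)⟩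
        · exact ⟨t, ht, Or.inl (Or.inr (Or.inl ⟨h, fun hc => hx hc.2⟩))⟩
  refine ⟨Q, hQsub, ⟨hSA, ?_, ?_, ?_⟩, ?_⟩
  · -- conflict-freeness
    rintro u hu v hv ((h | h) | h)
    · exact hcf u hu v hv (Or.inl (Or.inl h))
    · rcases h with ⟨h, _⟩ | ⟨h1, _⟩
      · exact hcf u hu v hv (Or.inr h)
      · rw [Set.mem_singleton_iff, Prod.mk.injEq] at h1
        exact hb (h1.1 ▸ hu)
    · exact hcf u hu v hv (Or.inl (Or.inr h))
  · -- admissibility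
    rintro s' hs' u ((h | h) | h)
    · obtain ⟨t, ht, htu⟩ := hadm s' hs' u (Or.inl (Or.inl h))
      exact (hplus u).mpr ⟨t, ht, htu⟩
    · rcases h with ⟨h, _⟩ | ⟨h1, _⟩
      · obtain ⟨t, ht, htu⟩ := hadm s' hs' u (Or.inr h)
        exact (hplus u).mpr ⟨t, ht, htu⟩
      · rw [Set.mem_singleton_iff, Prod.mk.injEq] at h1
        -- u = b attacks s' = s; defended by (a,b)
        exact ⟨a, ha, by rw [h1.1]; exact Or.inr rfl⟩
    · rw [Set.mem_singleton_iff, Prod.mk.injEq] at h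
      exact absurd (h.2 ▸ hs') hb
  · -- completeness
    intro v hv hdef
    by_cases hvb : v = b
    · subst hvb
      obtain ⟨t, ht, hta⟩ := hdef a (Or.inr rfl)
      exact absurd ((hplus a).mp ⟨t, ht, hta⟩).choose_spec.2
        (fun h => hcf _ ((hplus a).mp ⟨t, ht, hta⟩).choose_spec.1 a ha h)
    · apply hcomp v hv
      rintro u ((h | h) | h)
      · obtain ⟨t, ht, htu⟩ := hdef u (Or.inl (Or.inl h))
        exact (hplus u).mp ⟨t, ht, htu⟩
      · rw [Set.mem_singleton_iff, Prod.mk.injEq] at h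
        exact absurd h.2 hvb
      · obtain ⟨t, ht, htu⟩ := hdef u <| by
          by_cases hub : u ∈ S ∧ v = b
          · exact absurd hub.2 hvb
          · exact Or.inl (Or.inr (Or.inl ⟨h, hub⟩))
        exact (hplus u).mp ⟨t, ht, htu⟩
  · -- S is not complete without (a,b): s is attacked by b, undefended
    rintro ⟨_, _, hadm', _⟩
    obtain ⟨t, ht, htb⟩ := hadm' s hsS b hbs3
    exact hSb3 t ht htb
/-- The set of forced additions in `OutRel` (pure form). -/
def NewS (R Rq : Set (α × α)) (S : Set α) (a b : α) : Set (α × α) :=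
  {p | p ∈ Rq ∧ p.1 ∈ S ∧ ((p.2, b) ∈ R ∧ p.2 ≠ a)}

/-- The set of forced removals in `OutRel` (pure form). -/
def RemS (Rq : Set (α × α)) (a b : α) : Set (α × α) :=
  {p | p ∈ Rq ∧ p.1 ≠ a ∧ p.2 = b}

/-- RHS case 1 implies the witness for `RE⁺`. -/
lemma pb1 (hbA : b ∈ A) (hb : b ∉ S) (habR : (a, b) ∉ R)
    (hbb : (b, b) ∉ R)
    (hout : ∀ u, (u, b) ∈ R → u ≠ a → ∃ s ∈ S, (s, u) ∈ R ∪ Rq)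
    (h : ∃ Q₁ ⊆ (Rq \ NewS R Rq S a b) \ RemS Rq a b, Co A (R ∪ NewS R Rq S a b ∪ Q₁) S) :
    ∃ Q ⊆ Rq \ {(a, b)}, Co A (R ∪ Q ∪ {(a, b)}) S ∧ ¬ Co A (R ∪ Q) S := by
  obtain ⟨Q₁, hQ₁, hco⟩ := h
  -- attackers of b in F₁ are certain, or the attack is (a,b)
  have hattb : ∀ u, (u, b) ∈ R ∪ NewS R Rq S a b ∪ Q₁ → (u, b) ∈ R ∨ u = a := by
    rintro u ((h | h) | h)
    · exact Or.inl h
    · exact absurd h.2.2.1 hbb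
    · obtain ⟨⟨hq, _⟩, hrem⟩ := hQ₁ h
      by_contra hc
      push_neg at hc
      exact hrem ⟨hq, hc.2, rfl⟩
  -- each certain attacker of b is counter-attacked in F₁ and differs from b
  have hcert : ∀ u, (u, b) ∈ R →
      (∃ t ∈ S, (t, u) ∈ R ∪ NewS R Rq S a b ∪ Q₁) ∧ u ≠ b := by
    intro u hu
    have hub : u ≠ b := fun he => hbb (he ▸ hu)
    have hua : u ≠ a := fun he => habR (he ▸ hu)
    obtain ⟨s, hs, hsu⟩ := hout u hu hua
    rcases hsu with h | h
    · exact ⟨⟨s, hs, Or.inl (Or.inl h)⟩, hub⟩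
    · exact ⟨⟨s, hs, Or.inl (Or.inr ⟨h, hs, hu, hua⟩)⟩, hub⟩
  -- the attack (a,b) must be present in the witness completion
  have hrF : (a, b) ∈ Q₁ := by
    by_contra hno
    apply hb
    apply hco.2.2.2 b hbA
    intro u hu
    rcases hattb u hu with h | rfl
    · exact (hcert u h).1
    · rcases hu with (h' | h') | h'
      · exact absurd h' habR
      · exact absurd h'.2.2.1 hbb
      · exact absurd h' hno
  refine ⟨(NewS R Rq S a b ∪ Q₁) \ {(a, b)}, ?_, ?_, ?_⟩
  · rintro p ⟨hp | hp, hpne⟩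
    · exact ⟨hp.1, hpne⟩
    · exact ⟨((hQ₁ hp).1).1, hpne⟩
  · have heq : R ∪ (NewS R Rq S a b ∪ Q₁) \ {(a, b)} ∪ {(a, b)}
        = R ∪ NewS R Rq S a b ∪ Q₁ := by
      ext p
      simp only [Set.mem_union, Set.mem_diff, Set.mem_singleton_iff]
      by_cases hp : p = (a, b)
      · subst hp; simp [hrF]
      · tauto
    rw [heq]
    exact hco
  · rintro ⟨_, _, _, hcomp'⟩
    apply hb
    apply hcomp' b hbA
    intro u hu
    have huF : (u, b) ∈ R ∪ NewS R Rq S a b ∪ Q₁ := by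
      rcases hu with h | ⟨h | h, _⟩
      · exact Or.inl (Or.inl h)
      · exact Or.inl (Or.inr h)
      · exact Or.inr h
    rcases hattb u huF with h | rfl
    · obtain ⟨⟨t, ht, htF⟩, hub⟩ := hcert u h
      have htne : (t, u) ≠ (a, b) := fun he => hub (congrArg Prod.snd he)
      refine ⟨t, ht, ?_⟩
      rcases htF with (h' | h') | h'
      · exact Or.inl h'
      · exact Or.inr ⟨Or.inl h', htne⟩
      · exact Or.inr ⟨Or.inr h', htne⟩
    · rcases hu with h | ⟨_, hne⟩
      · exact absurd h habR
      · exact absurd rfl hne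

/-- Forward direction for `RE⁺`. -/
lemma pf (hbA : b ∈ A) (ha : a ∈ S) (hb : b ∉ S) (habR : (a, b) ∉ R)
    (hrab : (a, b) ∈ Rq)
    (h : ∃ Q ⊆ Rq \ {(a, b)}, Co A (R ∪ Q ∪ {(a, b)}) S ∧ ¬ Co A (R ∪ Q) S) :
    ((b, b) ∉ R ∧ (∀ u, (u, b) ∈ R → u ≠ a → ∃ s ∈ S, (s, u) ∈ R ∪ Rq) ∧
      ∃ Q₁ ⊆ (Rq \ NewS R Rq S a b) \ RemS Rq a b, Co A (R ∪ NewS R Rq S a b ∪ Q₁) S)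
    ∨ ((∃ s ∈ S, (b, s) ∈ R ∪ Rq) ∧ (∀ u ∈ S, (u, b) ∉ R) ∧
      ∃ Q₂ ⊆ Rq \ {(a, b)}, Co A (R ∪ {(a, b)} ∪ Q₂) S) := by
  obtain ⟨Q, hQ, hcoP, hnco⟩ := h
  have hSA := hcoP.1
  have hcf := hcoP.2.1
  have hadm := hcoP.2.2.1
  have hcomp := hcoP.2.2.2
  have hcfF : ∀ u ∈ S, ∀ v ∈ S, (u, v) ∉ R ∪ Q :=
    fun u hu v hv h => hcf u hu v hv (Or.inl h)
  -- S does not attack b without the attack (a,b)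
  have hnbplus : ¬∃ t ∈ S, (t, b) ∈ R ∪ Q := by
    rintro ⟨t, ht, htb⟩
    apply hnco
    have hplus : ∀ x, (∃ t' ∈ S, (t', x) ∈ R ∪ Q ∪ {(a, b)}) ↔
        ∃ t' ∈ S, (t', x) ∈ R ∪ Q := by
      intro x
      constructor
      · rintro ⟨t', ht', h | h⟩
        · exact ⟨t', ht', h⟩
        · rw [Set.mem_singleton_iff, Prod.mk.injEq] at h
          exact h.2 ▸ ⟨t, ht, htb⟩
      · rintro ⟨t', ht', h⟩
        exact ⟨t', ht', Or.inl h⟩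
    refine ⟨hSA, hcfF, ?_, ?_⟩
    · intro s' hs' u hu
      exact (hplus u).mp (hadm s' hs' u (Or.inl hu))
    · intro v hv hdef
      by_cases hvb : v = b
      · subst hvb
        obtain ⟨t', ht', ht't⟩ := hdef t htb
        exact absurd ht't (hcfF t' ht' t ht)
      · apply hcomp v hv
        rintro u (hu | hu)
        · obtain ⟨t', ht', htu⟩ := hdef u hu
          exact ⟨t', ht', Or.inl htu⟩
        · rw [Set.mem_singleton_iff, Prod.mk.injEq] at hu
          exact absurd hu.2 hvb
  by_cases hatt : ∃ s ∈ S, (b, s) ∈ R ∪ Q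
  · -- case 2
    right
    obtain ⟨s, hs, hbs⟩ := hatt
    refine ⟨⟨s, hs, ?_⟩, fun u hu h => hnbplus ⟨u, hu, Or.inl h⟩, Q, hQ, ?_⟩
    · rcases hbs with h | h
      · exact Or.inl h
      · exact Or.inr (hQ h).1
    · rw [Set.union_right_comm]
      exact hcoP
  · -- case 1
    left
    have hadmF : ∀ s' ∈ S, ∀ u, (u, s') ∈ R ∪ Q → ∃ t ∈ S, (t, u) ∈ R ∪ Q := by
      intro s' hs' u hu
      obtain ⟨t, ht, htu⟩ := hadm s' hs' u (Or.inl hu)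
      rcases htu with h | h
      · exact ⟨t, ht, h⟩
      · rw [Set.mem_singleton_iff, Prod.mk.injEq] at h
        exact absurd ⟨s', hs', h.2 ▸ hu⟩ hatt
    have hfail : ¬∀ v ∈ A, (∀ u, (u, v) ∈ R ∪ Q → ∃ t ∈ S, (t, u) ∈ R ∪ Q) → v ∈ S :=
      fun hc => hnco ⟨hSA, hcfF, hadmF, hc⟩
    push_neg at hfail
    obtain ⟨v, hv, hdefv, hvS⟩ := hfail
    have hvb : v = b := by
      by_contra hvb
      apply hvS
      apply hcomp v hv
      rintro u (hu | hu)
      · obtain ⟨t, ht, htu⟩ := hdefv u hu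
        exact ⟨t, ht, Or.inl htu⟩
      · rw [Set.mem_singleton_iff, Prod.mk.injEq] at hu
        exact absurd hu.2 hvb
    subst v
    have hbbc : (b, b) ∉ R := by
      intro h
      obtain ⟨t, ht, htb⟩ := hdefv b (Or.inl h)
      exact hnbplus ⟨t, ht, htb⟩
    have houtc : ∀ u, (u, b) ∈ R → u ≠ a → ∃ s ∈ S, (s, u) ∈ R ∪ Rq := by
      intro u hu _
      obtain ⟨t, ht, htu⟩ := hdefv u (Or.inl hu)
      rcases htu with h | h
      · exact ⟨t, ht, Or.inl h⟩
      · exact ⟨t, ht, Or.inr (hQ h).1⟩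
    refine ⟨hbbc, houtc, ((Q ∪ {(a, b)}) \ NewS R Rq S a b) \ RemS Rq a b, ?_, ?_⟩
    · rintro p ⟨⟨hp1, hp2⟩, hp3⟩
      refine ⟨⟨?_, hp2⟩, hp3⟩
      rcases hp1 with h | h
      · exact (hQ h).1
      · rw [Set.mem_singleton_iff] at h
        exact h ▸ hrab
    · set New := NewS R Rq S a b with hNdef
      set Q₁ := ((Q ∪ {(a, b)}) \ New) \ RemS Rq a b with hQ₁def
      have hNewt : ∀ p ∈ New, (∃ t ∈ S, (t, p.2) ∈ R ∪ Q) ∧ p.2 ∉ S := by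
        rintro p ⟨hq, h1, h2, h3⟩
        obtain ⟨t, ht, htp⟩ := hdefv p.2 (Or.inl h2)
        exact ⟨⟨t, ht, htp⟩, fun hp2 => hcfF t ht p.2 hp2 htp⟩
      have hF2ofF : ∀ t x, t ∈ S → (t, x) ∈ R ∪ Q → (t, x) ∈ R ∪ New ∪ Q₁ := by
        intro t x ht htx
        rcases htx with h | h
        · exact Or.inl (Or.inl h)
        · by_cases hN : (t, x) ∈ New
          · exact Or.inl (Or.inr hN)
          · refine Or.inr ⟨⟨Or.inl h, hN⟩, fun hrem => ?_⟩
            exact hnbplus ⟨t, ht, Or.inr (hrem.2.2 ▸ h)⟩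
      have habF₂ : (a, b) ∈ R ∪ New ∪ Q₁ := by
        refine Or.inr ⟨⟨Or.inr rfl, fun hN => hbbc hN.2.2.1⟩, fun hrem => hrem.2.1 rfl⟩
      have hplus2 : ∀ x, (∃ t ∈ S, (t, x) ∈ R ∪ New ∪ Q₁) ↔
          (∃ t ∈ S, (t, x) ∈ R ∪ Q ∪ {(a, b)}) := by
        intro x
        constructor
        · rintro ⟨t, ht, (h | h) | h⟩
          · exact ⟨t, ht, Or.inl (Or.inl h)⟩
          · obtain ⟨⟨t', ht', htp⟩, _⟩ := hNewt _ h
            exact ⟨t', ht', Or.inl htp⟩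
          · rcases h.1.1 with h' | h'
            · exact ⟨t, ht, Or.inl (Or.inr h')⟩
            · exact ⟨t, ht, Or.inr h'⟩
        · rintro ⟨t, ht, h | h⟩
          · exact ⟨t, ht, hF2ofF t x ht h⟩
          · rw [Set.mem_singleton_iff, Prod.mk.injEq] at h
            exact h.2 ▸ ⟨a, ha, habF₂⟩
      refine ⟨hSA, ?_, ?_, ?_⟩
      · rintro u hu v' hv' ((h | h) | h)
        · exact hcf u hu v' hv' (Or.inl (Or.inl h))
        · exact (hNewt (u, v') h).2 hv'
        · rcases h.1.1 with h' | h'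
          · exact hcf u hu v' hv' (Or.inl (Or.inr h'))
          · rw [Set.mem_singleton_iff, Prod.mk.injEq] at h'
            exact hb (h'.2 ▸ hv')
      · rintro s' hs' u ((h | h) | h)
        · exact (hplus2 u).mpr (hadm s' hs' u (Or.inl (Or.inl h)))
        · exact absurd hs' (hNewt (u, s') h).2
        · rcases h.1.1 with h' | h'
          · exact (hplus2 u).mpr (hadm s' hs' u (Or.inl (Or.inr h')))
          · rw [Set.mem_singleton_iff, Prod.mk.injEq] at h'
            exact absurd (h'.2 ▸ hs') hb
      · intro v' hv' hdef₂
        by_cases hv'b : v' = b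
        · subst hv'b
          obtain ⟨t, ht, hta⟩ := hdef₂ a habF₂
          obtain ⟨t', ht', hta'⟩ := (hplus2 a).mp ⟨t, ht, hta⟩
          exact absurd hta' (hcf t' ht' a ha)
        · apply hcomp v' hv'
          rintro u (hu | hu)
          · have huF₂ : (u, v') ∈ R ∪ New ∪ Q₁ := by
              rcases hu with h | h
              · exact Or.inl (Or.inl h)
              · by_cases hN : (u, v') ∈ New
                · exact Or.inl (Or.inr hN)
                · exact Or.inr ⟨⟨Or.inl h, hN⟩, fun hrem => hv'b hrem.2.2⟩
            exact (hplus2 u).mp (hdef₂ u huF₂)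
          · rw [Set.mem_singleton_iff, Prod.mk.injEq] at hu
            exact absurd hu.2 hv'b

/-- Forward direction for `RE⁻`. -/
lemma mf (ha : a ∈ S) (hb : b ∉ S) (hrab : (a, b) ∈ Rq)
    (h : ∃ Q ⊆ Rq \ {(a, b)}, Co A (R ∪ Q) S ∧ ¬ Co A (R ∪ Q ∪ {(a, b)}) S) :
    ∃ v, v ∈ A ∧ v ∉ S ∧ v ≠ b ∧ (b, v) ∈ R ∪ Rq ∧ (v, v) ∉ R ∧
      (∀ u, (u, v) ∈ R → u ≠ b → ∃ s ∈ S, (s, u) ∈ R ∪ Rq) ∧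
      ∃ Q₁ ⊆ (Rq \ NewS R Rq S b v) \ RemS Rq b v, Co A (R ∪ NewS R Rq S b v ∪ Q₁) S := by
  obtain ⟨Q, hQ, hcoF, hncoP⟩ := h
  have hSA := hcoF.1
  have hcf := hcoF.2.1
  have hadm := hcoF.2.2.1
  have hcomp := hcoF.2.2.2
  have cfP : ∀ u ∈ S, ∀ w ∈ S, (u, w) ∉ R ∪ Q ∪ {(a, b)} := by
    rintro u hu w hw (h | h)
    · exact hcf u hu w hw h
    · rw [Set.mem_singleton_iff, Prod.mk.injEq] at h
      exact hb (h.2 ▸ hw)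
  have admP : ∀ s' ∈ S, ∀ u, (u, s') ∈ R ∪ Q ∪ {(a, b)} →
      ∃ t ∈ S, (t, u) ∈ R ∪ Q ∪ {(a, b)} := by
    rintro s' hs' u (h | h)
    · obtain ⟨t, ht, htu⟩ := hadm s' hs' u h
      exact ⟨t, ht, Or.inl htu⟩
    · rw [Set.mem_singleton_iff, Prod.mk.injEq] at h
      exact absurd (h.2 ▸ hs') hb
  have hfailP : ¬∀ w ∈ A, (∀ u, (u, w) ∈ R ∪ Q ∪ {(a, b)} →
      ∃ t ∈ S, (t, u) ∈ R ∪ Q ∪ {(a, b)}) → w ∈ S :=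
    fun hc => hncoP ⟨hSA, cfP, admP, hc⟩
  push_neg at hfailP
  obtain ⟨v, hv, hdefv, hvS⟩ := hfailP
  have hvb : v ≠ b := by
    intro he
    obtain ⟨t, ht, hta⟩ := hdefv a (Or.inr (by rw [he]; rfl))
    exact cfP t ht a ha hta
  have hbnp : ¬∃ t ∈ S, (t, b) ∈ R ∪ Q := by
    rintro ⟨t, ht, htb⟩
    apply hvS
    apply hcomp v hv
    intro u hu
    obtain ⟨t', ht', h'⟩ := hdefv u (Or.inl hu)
    rcases h' with h' | h'
    · exact ⟨t', ht', h'⟩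
    · rw [Set.mem_singleton_iff, Prod.mk.injEq] at h'
      exact ⟨t, ht, h'.2 ▸ htb⟩
  have hSnoatt : ∀ u ∈ S, (u, v) ∉ R ∪ Q ∪ {(a, b)} := by
    intro u hu h
    obtain ⟨t, ht, htu⟩ := hdefv u h
    exact cfP t ht u hu htu
  have hbvF : (b, v) ∈ R ∪ Q := by
    have hnotdefF : ¬∀ u, (u, v) ∈ R ∪ Q → ∃ t ∈ S, (t, u) ∈ R ∪ Q :=
      fun hc => hvS (hcomp v hv hc)
    push_neg at hnotdefF
    obtain ⟨u, huv, hnd⟩ := hnotdefF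
    obtain ⟨t, ht, htu⟩ := hdefv u (Or.inl huv)
    rcases htu with h' | h'
    · exact absurd h' (hnd t ht)
    · rw [Set.mem_singleton_iff, Prod.mk.injEq] at h'
      exact h'.2 ▸ huv
  have hvv : (v, v) ∉ R := by
    intro h
    obtain ⟨t, ht, htv⟩ := hdefv v (Or.inl (Or.inl h))
    exact hSnoatt t ht htv
  have hout : ∀ u, (u, v) ∈ R → u ≠ b → ∃ s ∈ S, (s, u) ∈ R ∪ Rq := by
    intro u hu hub
    obtain ⟨t, ht, htu⟩ := hdefv u (Or.inl (Or.inl hu))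
    rcases htu with (h' | h') | h'
    · exact ⟨t, ht, Or.inl h'⟩
    · exact ⟨t, ht, Or.inr (hQ h').1⟩
    · rw [Set.mem_singleton_iff, Prod.mk.injEq] at h'
      exact absurd h'.2 hub
  have hbvRq : (b, v) ∈ R ∪ Rq := by
    rcases hbvF with h | h
    · exact Or.inl h
    · exact Or.inr (hQ h).1
  refine ⟨v, hv, hvS, hvb, hbvRq, hvv, hout, (Q \ NewS R Rq S b v) \ RemS Rq b v, ?_, ?_⟩
  · rintro p ⟨⟨hp1, hp2⟩, hp3⟩
    exact ⟨⟨(hQ hp1).1, hp2⟩, hp3⟩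
  · set New := NewS R Rq S b v with hNdef
    set Q₁ := (Q \ New) \ RemS Rq b v with hQ₁def
    have hNewt : ∀ p ∈ New, (∃ t ∈ S, (t, p.2) ∈ R ∪ Q) ∧ p.2 ∉ S := by
      rintro p ⟨hq, h1, h2, h3⟩
      obtain ⟨t, ht, htp⟩ := hdefv p.2 (Or.inl (Or.inl h2))
      rcases htp with h' | h'
      · exact ⟨⟨t, ht, h'⟩, fun hp2 => hcf t ht p.2 hp2 h'⟩
      · rw [Set.mem_singleton_iff, Prod.mk.injEq] at h'
        exact absurd h'.2 h3
    have hF4ofF : ∀ t x, t ∈ S → (t, x) ∈ R ∪ Q → (t, x) ∈ R ∪ New ∪ Q₁ := by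
      intro t x ht htx
      rcases htx with h | h
      · exact Or.inl (Or.inl h)
      · by_cases hN : (t, x) ∈ New
        · exact Or.inl (Or.inr hN)
        · refine Or.inr ⟨⟨h, hN⟩, fun hrem => hSnoatt t ht ?_⟩
          have hx : x = v := hrem.2.2
          rw [hx] at h
          exact Or.inl (Or.inr h)
    have hplus4 : ∀ x, (∃ t ∈ S, (t, x) ∈ R ∪ New ∪ Q₁) ↔
        (∃ t ∈ S, (t, x) ∈ R ∪ Q) := by
      intro x
      constructor
      · rintro ⟨t, ht, (h | h) | h⟩
        · exact ⟨t, ht, Or.inl h⟩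
        · exact (hNewt (t, x) h).1
        · exact ⟨t, ht, Or.inr h.1.1⟩
      · rintro ⟨t, ht, h⟩
        exact ⟨t, ht, hF4ofF t x ht h⟩
    have hbvF₄ : (b, v) ∈ R ∪ New ∪ Q₁ := by
      rcases hbvF with h | h
      · exact Or.inl (Or.inl h)
      · refine Or.inr ⟨⟨h, fun hN => hvv hN.2.2.1⟩, fun hrem => hrem.2.1 rfl⟩
    refine ⟨hSA, ?_, ?_, ?_⟩
    · rintro u hu w hw ((h | h) | h)
      · exact hcf u hu w hw (Or.inl h)
      · exact (hNewt (u, w) h).2 hw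
      · exact hcf u hu w hw (Or.inr h.1.1)
    · rintro s' hs' u ((h | h) | h)
      · exact (hplus4 u).mpr (hadm s' hs' u (Or.inl h))
      · exact absurd hs' (hNewt (u, s') h).2
      · exact (hplus4 u).mpr (hadm s' hs' u (Or.inr h.1.1))
    · intro w hw hdef₄
      by_cases hwv : w = v
      · subst hwv
        obtain ⟨t, ht, htb⟩ := hdef₄ b hbvF₄
        exact absurd ((hplus4 b).mp ⟨t, ht, htb⟩) hbnp
      · apply hcomp w hw
        intro u huw
        have huwF₄ : (u, w) ∈ R ∪ New ∪ Q₁ := by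
          rcases huw with h | h
          · exact Or.inl (Or.inl h)
          · by_cases hN : (u, w) ∈ New
            · exact Or.inl (Or.inr hN)
            · exact Or.inr ⟨⟨h, hN⟩, fun hrem => hwv hrem.2.2⟩
        exact (hplus4 u).mp (hdef₄ u huwF₄)

/-- Backward direction for `RE⁻`. -/
lemma mb {v : α} (ha : a ∈ S) (hvA : v ∈ A) (hvS : v ∉ S) (hvb : v ≠ b)
    (hrab : (a, b) ∈ Rq) (hbv : (b, v) ∈ R ∪ Rq) (hvv : (v, v) ∉ R)
    (hout : ∀ u, (u, v) ∈ R → u ≠ b → ∃ s ∈ S, (s, u) ∈ R ∪ Rq)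
    (h : ∃ Q₁ ⊆ (Rq \ NewS R Rq S b v) \ RemS Rq b v,
      Co A (R ∪ NewS R Rq S b v ∪ Q₁) S) :
    ∃ Q ⊆ Rq \ {(a, b)}, Co A (R ∪ Q) S ∧ ¬ Co A (R ∪ Q ∪ {(a, b)}) S := by
  obtain ⟨Q₁, hQ₁, hco₄⟩ := h
  have hSA := hco₄.1
  have hcomp := hco₄.2.2.2
  have hattv : ∀ u, (u, v) ∈ R ∪ NewS R Rq S b v ∪ Q₁ → (u, v) ∈ R ∨ u = b := by
    rintro u ((h | h) | h)
    · exact Or.inl h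
    · exact absurd h.2.2.1 hvv
    · obtain ⟨⟨hq, _⟩, hrem⟩ := hQ₁ h
      by_contra hc
      push_neg at hc
      exact hrem ⟨hq, hc.2, rfl⟩
  have hcertv : ∀ u, (u, v) ∈ R → u ≠ b →
      (∃ t ∈ S, (t, u) ∈ R ∪ NewS R Rq S b v ∪ Q₁) ∧ u ≠ v := by
    intro u hu hub
    have huv : u ≠ v := fun he => hvv (he ▸ hu)
    obtain ⟨s, hs, hsu⟩ := hout u hu hub
    rcases hsu with h | h
    · exact ⟨⟨s, hs, Or.inl (Or.inl h)⟩, huv⟩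
    · exact ⟨⟨s, hs, Or.inl (Or.inr ⟨h, hs, hu, hub⟩)⟩, huv⟩
  have K : (b, v) ∈ R ∪ NewS R Rq S b v ∪ Q₁ ∧
      ¬∃ t ∈ S, (t, b) ∈ R ∪ NewS R Rq S b v ∪ Q₁ := by
    by_contra hK
    push_neg at hK
    apply hvS
    apply hcomp v hvA
    intro u huv
    rcases hattv u huv with hR | he
    · by_cases hub : u = b
      · subst hub
        exact hK huv
      · exact (hcertv u hR hub).1
    · subst he
      exact hK huv
  obtain ⟨hbvF₄, hbnp₄⟩ := K
  have habF₄ : (a, b) ∉ R ∪ NewS R Rq S b v ∪ Q₁ := fun h => hbnp₄ ⟨a, ha, h⟩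
  refine ⟨NewS R Rq S b v ∪ Q₁, ?_, ?_, ?_⟩
  · rintro p (hp | hp)
    · refine ⟨hp.1, fun he => ?_⟩
      rw [Set.mem_singleton_iff] at he
      exact habF₄ (he ▸ Or.inl (Or.inr hp))
    · refine ⟨(hQ₁ hp).1.1, fun he => ?_⟩
      rw [Set.mem_singleton_iff] at he
      exact habF₄ (he ▸ Or.inr hp)
  · rw [← Set.union_assoc]
    exact hco₄
  · intro hco'
    apply hvS
    apply hco'.2.2.2 v hvA
    rintro u (hu | hu)
    · have huF₄ : (u, v) ∈ R ∪ NewS R Rq S b v ∪ Q₁ := by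
        rcases hu with h | h
        · exact Or.inl (Or.inl h)
        · rcases h with h | h
          · exact Or.inl (Or.inr h)
          · exact Or.inr h
      rcases hattv u huF₄ with hR | he
      · by_cases hub : u = b
        · exact ⟨a, ha, Or.inr (by rw [hub]; rfl)⟩
        · obtain ⟨⟨t, ht, htF⟩, hune⟩ := hcertv u hR hub
          refine ⟨t, ht, ?_⟩
          rcases htF with (h' | h') | h'
          · exact Or.inl (Or.inl h')
          · exact Or.inl (Or.inr (Or.inl h'))
          · exact Or.inl (Or.inr (Or.inr h'))
      · exact ⟨a, ha, Or.inr (by rw [he]; rfl)⟩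
    · rw [Set.mem_singleton_iff, Prod.mk.injEq] at hu
      exact absurd hu.2 hvb

/-- Bridge: `OutRel` in pure form. -/
lemma outRel_iff {I : IAF α} (hWF : I.WF) (hAt : I.Aq = ∅) (S : Set α) (x y : α) :
    OutRel I S (x, y) ↔
      ((∀ u, (u, y) ∈ I.R → u ≠ x → ∃ s ∈ S, (s, u) ∈ I.R ∪ I.Rq) ∧
       ∃ Q₁ ⊆ (I.Rq \ NewS I.R I.Rq S x y) \ RemS I.Rq x y,
         Co I.A (I.R ∪ NewS I.R I.Rq S x y ∪ Q₁) S) := by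
  have hRs : I.R ⊆ I.A ×ˢ I.A := by have := hWF.2.2.1; rwa [hAt, Set.union_empty] at this
  have hRqs : I.Rq ⊆ I.A ×ˢ I.A := by have := hWF.2.2.2; rwa [hAt, Set.union_empty] at this
  have eNew : {p | p ∈ I.Rq ∧ p.1 ∈ S ∧ p.2 ∈ I.minusI {(x, y).2} \ {(x, y).1}}
      = NewS I.R I.Rq S x y := by
    ext p
    simp only [Set.mem_setOf_eq, IAF.minusI, Set.mem_diff, Set.mem_singleton_iff, hAt,
      Set.union_empty, Set.mem_setOf_eq, NewS]
    constructor
    · rintro ⟨h1, h2, ⟨_, c, hc, hpc⟩, h4⟩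
      exact ⟨h1, h2, hc ▸ hpc, h4⟩
    · rintro ⟨h1, h2, h3, h4⟩
      exact ⟨h1, h2, ⟨⟨(hRs h3).1, y, rfl, h3⟩, h4⟩⟩
  have eRem : {p | p ∈ I.Rq ∧ p.1 ≠ (x, y).1 ∧ p.2 = (x, y).2} = RemS I.Rq x y := rfl
  unfold OutRel
  apply and_congr
  · rw [Set.eq_empty_iff_forall_notMem]
    constructor
    · intro h u huR hux
      by_contra hc
      push_neg at hc
      exact h u ⟨⟨⟨Or.inl (hRs huR).1, y, rfl, huR⟩, hux⟩, Or.inl (hRs huR).1, hc⟩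
    · rintro h u ⟨⟨⟨_, c, hc, hucR⟩, hux⟩, _, hsim⟩
      rw [Set.mem_singleton_iff] at hc
      obtain ⟨s, hs, hsu⟩ := h u (by rw [hc] at hucR; exact hucR) hux
      exact hsim s hs hsu
  · have hAq₁ : ((I.addR {p | p ∈ I.Rq ∧ p.1 ∈ S ∧ p.2 ∈ I.minusI {(x, y).2} \ {(x, y).1}}).subR
        {p | p ∈ I.Rq ∧ p.1 ≠ (x, y).1 ∧ p.2 = (x, y).2}).Aq = ∅ := hAt
    have hWF₁ : ((I.addR {p | p ∈ I.Rq ∧ p.1 ∈ S ∧ p.2 ∈ I.minusI {(x, y).2} \ {(x, y).1}}).subR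
        {p | p ∈ I.Rq ∧ p.1 ≠ (x, y).1 ∧ p.2 = (x, y).2}).WF := by
      refine ⟨hWF.1, ?_, ?_, ?_⟩
      · refine Set.disjoint_union_left.mpr ⟨?_, ?_⟩
        · exact (hWF.2.1.mono_right (Set.diff_subset.trans Set.diff_subset))
        · exact Set.disjoint_sdiff_right.mono_right Set.diff_subset
      · exact Set.union_subset hWF.2.2.1 fun p hp => hWF.2.2.2 hp.1
      · exact (Set.diff_subset.trans Set.diff_subset).trans hWF.2.2.2
    rw [posVer_co_iff hWF₁ hAq₁]
    show (∃ Q ⊆ (I.Rq \ _) \ _, Co I.A (I.R ∪ _ ∪ Q) S) ↔ _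
    rw [eNew, eRem]

end Core

end Aux


/-- `(co,true)`-relevance of an uncertain attack from `S` to outside. -/
theorem stmt9 {α : Type u} (I : IAF α) (S : Set α) (r : α × α)
    (hWF : I.WF) (hAt : I.Aq = ∅) (hS : S ⊆ I.A)
    (hns : ¬ I.stableSem S Sem.co)
    (hr : r ∈ I.Rq) (ha : r.1 ∈ S) (hb : r.2 ∉ S) :
    (Elem.att r ∈ REplus I S (Sem.co, true) ↔
      ((r.2, r.2) ∉ I.R ∧ OutRel I S r) ∨
      (¬ S ⊆ I.simI {r.2} ∧ r.2 ∉ I.plusI S ∧ PosVer Sem.co (I.addR {r}) S)) ∧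
    (Elem.att r ∈ REminus I S (Sem.co, true) ↔
      ∃ v ∈ I.A \ (S ∪ {r.2}), (r.2, v) ∈ I.R ∪ I.Rq ∧ (v, v) ∉ I.R ∧
        OutRel I S (r.2, v)) := by
  obtain ⟨a, b⟩ := r
  have hRs : I.R ⊆ I.A ×ˢ I.A := by have := hWF.2.2.1; rwa [hAt, Set.union_empty] at this
  have hRqs : I.Rq ⊆ I.A ×ˢ I.A := by have := hWF.2.2.2; rwa [hAt, Set.union_empty] at this
  simp only at ha hb
  have hbA : b ∈ I.A := (hRqs hr).2
  have habR : (a, b) ∉ I.R := fun h => (hWF.2.1.ne_of_mem h hr) rfl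
  -- membership in RE⁺ / RE⁻, pure form
  have ei : (Elem.att (a, b) ∈ REplus I S (Sem.co, true)) ↔
      ∃ Q ⊆ I.Rq \ {(a, b)}, Co I.A (I.R ∪ Q ∪ {(a, b)}) S ∧ ¬ Co I.A (I.R ∪ Q) S := by
    have hw := att_witness_iff hWF hAt hr (fun F => AF.isCo F S) (fun F => ¬ AF.isCo F S)
    constructor
    · rintro ⟨_, h⟩
      obtain ⟨Q, hQ, h1, h2⟩ := hw.mp h
      have hs2 : I.R ∪ Q ⊆ I.A ×ˢ I.A :=
        Set.union_subset hRs fun p hp => hRqs (hQ hp).1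
      have hs1 : I.R ∪ Q ∪ {(a, b)} ⊆ I.A ×ˢ I.A :=
        Set.union_subset hs2 (by simpa using hRqs hr)
      exact ⟨Q, hQ, (isCo_iff_Co hs1).mp h1, fun hc => h2 ((isCo_iff_Co hs2).mpr hc)⟩
    · rintro ⟨Q, hQ, h1, h2⟩
      have hs2 : I.R ∪ Q ⊆ I.A ×ˢ I.A :=
        Set.union_subset hRs fun p hp => hRqs (hQ hp).1
      have hs1 : I.R ∪ Q ∪ {(a, b)} ⊆ I.A ×ˢ I.A :=
        Set.union_subset hs2 (by simpa using hRqs hr)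
      exact ⟨hr, hw.mpr ⟨Q, hQ, (isCo_iff_Co hs1).mpr h1,
        fun hc => h2 ((isCo_iff_Co hs2).mp hc)⟩⟩
  have ei' : (Elem.att (a, b) ∈ REminus I S (Sem.co, true)) ↔
      ∃ Q ⊆ I.Rq \ {(a, b)}, Co I.A (I.R ∪ Q) S ∧ ¬ Co I.A (I.R ∪ Q ∪ {(a, b)}) S := by
    have hw := att_witness_iff hWF hAt hr (fun F => ¬ AF.isCo F S) (fun F => AF.isCo F S)
    constructor
    · rintro ⟨_, I', hp, ho, hc1, hc2⟩
      obtain ⟨Q, hQ, h1, h2⟩ := hw.mp ⟨I', hp, ho, hc2, hc1⟩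
      have hs2 : I.R ∪ Q ⊆ I.A ×ˢ I.A :=
        Set.union_subset hRs fun p hp => hRqs (hQ hp).1
      have hs1 : I.R ∪ Q ∪ {(a, b)} ⊆ I.A ×ˢ I.A :=
        Set.union_subset hs2 (by simpa using hRqs hr)
      exact ⟨Q, hQ, (isCo_iff_Co hs2).mp h2, fun hc => h1 ((isCo_iff_Co hs1).mpr hc)⟩
    · rintro ⟨Q, hQ, h1, h2⟩
      have hs2 : I.R ∪ Q ⊆ I.A ×ˢ I.A :=
        Set.union_subset hRs fun p hp => hRqs (hQ hp).1
      have hs1 : I.R ∪ Q ∪ {(a, b)} ⊆ I.A ×ˢ I.A :=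
        Set.union_subset hs2 (by simpa using hRqs hr)
      obtain ⟨I', hp, ho, hx, hy⟩ := hw.mpr ⟨Q, hQ, fun hc => h2 ((isCo_iff_Co hs1).mp hc),
        (isCo_iff_Co hs2).mpr h1⟩
      exact ⟨hr, I', hp, ho, hy, hx⟩
  -- bridges for the second disjunct of (i)
  have hB2 : (¬ S ⊆ I.simI {b}) ↔ ∃ s ∈ S, (b, s) ∈ I.R ∪ I.Rq := by
    constructor
    · intro h
      obtain ⟨s, hs, hns⟩ := Set.not_subset.mp h
      by_contra hc
      push_neg at hc
      refine hns ⟨Or.inl (hS hs), fun c hc' => ?_⟩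
      rw [Set.mem_singleton_iff] at hc'
      subst hc'
      exact hc s hs
    · rintro ⟨s, hs, hbs⟩
      exact Set.not_subset.mpr ⟨s, hs, fun hmem => hmem.2 b rfl hbs⟩
  have hB3 : (b ∉ I.plusI S) ↔ ∀ u ∈ S, (u, b) ∉ I.R := by
    constructor
    · intro h u hu huR
      exact h ⟨Or.inl hbA, u, hu, huR⟩
    · rintro h ⟨_, u, hu, huR⟩
      exact h u hu huR
  have hB4 : PosVer Sem.co (I.addR {(a, b)}) S ↔
      ∃ Q₂ ⊆ I.Rq \ {(a, b)}, Co I.A (I.R ∪ {(a, b)} ∪ Q₂) S := by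
    have hWF' : (I.addR {(a, b)}).WF := by
      refine ⟨hWF.1, ?_, ?_, ?_⟩
      · refine Set.disjoint_union_left.mpr ⟨hWF.2.1.mono_right Set.diff_subset, ?_⟩
        exact Set.disjoint_sdiff_right
      · exact Set.union_subset hWF.2.2.1 fun p hp => hWF.2.2.2 (by simpa using hp ▸ hr)
      · exact Set.diff_subset.trans hWF.2.2.2
    exact posVer_co_iff hWF' hAt S
  constructor
  · -- part (i)
    rw [ei]
    constructor
    · intro h
      rcases pf hbA ha hb habR hr h with ⟨h1, h2, h3⟩ | ⟨h1, h2, h3⟩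
      · exact Or.inl ⟨h1, (outRel_iff hWF hAt S a b).mpr ⟨h2, h3⟩⟩
      · exact Or.inr ⟨hB2.mpr h1, hB3.mpr h2, hB4.mpr h3⟩
    · rintro (⟨h1, h2⟩ | ⟨h1, h2, h3⟩)
      · obtain ⟨ho1, ho2⟩ := (outRel_iff hWF hAt S a b).mp h2
        exact pb1 hbA hb habR h1 ho1 ho2
      · exact pb2 ha hb (hB2.mp h1) (hB3.mp h2) (hB4.mp h3)
  · -- part (ii)
    rw [ei']
    constructor
    · intro h
      obtain ⟨v, hvA, hvS, hvb, hbv, hvv, hout, hpos⟩ := mf ha hb hr h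
      refine ⟨v, ⟨hvA, fun hc => ?_⟩, hbv, hvv,
        (outRel_iff hWF hAt S b v).mpr ⟨hout, hpos⟩⟩
      rcases hc with hc | hc
      · exact hvS hc
      · exact hvb hc
    · rintro ⟨v, ⟨hvA, hvm⟩, hbv, hvv, hOR⟩
      obtain ⟨hout, hpos⟩ := (outRel_iff hWF hAt S b v).mp hOR
      exact mb ha hvA (fun h => hvm (Or.inl h)) (fun h => hvm (Or.inr h)) hr hbv hvv hout hpos
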